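/- arXiv:1405.5551 — 6 statements merged into one kernel-verified Lean document; each statement's English description precedes it below -/
import Mathlib

section
/- Let X be a Banach space and (x_t) a bounded net in X converging weak* to an element η of X**. Then the norm of η equals the limit over t of the infimum of the norms of elements of the convex hull of {x_j : j ≥ t}. -/
/-!
Write `K t` for the convex hull of the tail `{x j : j ≥ t}`. A functional maps `K t` into the
convex hull of its values on the tail, so any choice `y t ∈ K t` still converges weak* to `η`;
choosing `y t` of almost minimal norm, weak* lower semicontinuity of the bidual norm gives
`‖η‖ ≤ lim inf ‖K t‖`. Conversely, Hahn–Banach separates `K t` from the open ball of radius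
`inf ‖K t‖` by a functional of norm at most one that is at least this radius on the tail, hence
at `η`.
-/

open Filter Set Metric Topology

section Separation

variable {E : Type*} [NormedAddCommGroup E] [NormedSpace ℝ E]

theorem exists_norm_le_one_forall_le_apply {K : Set E} (hK : Convex ℝ K) {r : ℝ}
    (hr : ∀ y ∈ K, r ≤ ‖y‖) : ∃ f : StrongDual ℝ E, ‖f‖ ≤ 1 ∧ ∀ y ∈ K, r ≤ f y := by
  rcases le_or_gt r 0 with hr0 | hr0
  · exact ⟨0, by simp, fun y _ => by simpa using hr0⟩
  have hdisj : Disjoint (ball (0 : E) r) K :=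
    disjoint_left.2 fun y hy hyK => (hr y hyK).not_gt (by simpa using hy)
  obtain ⟨f, u, hfu, huK⟩ := geometric_hahn_banach_open (convex_ball 0 r) isOpen_ball hK hdisj
  have hu : 0 < u := by simpa using hfu 0 (mem_ball_self hr0)
  have hfu' : ∀ a ∈ closedBall (0 : E) r, f a ≤ u := by
    rw [← closure_ball (0 : E) hr0.ne']
    exact fun a ha => closure_minimal (fun b hb => (hfu b hb).le)
      (isClosed_le f.continuous continuous_const) ha
  have hf : ‖f‖ ≤ u / r := f.opNorm_bound_of_ball_bound hr0 u fun a ha => by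
    have hneg := hfu' (-a) (by simpa using ha)
    rw [map_neg] at hneg
    exact abs_le.2 ⟨by linarith, hfu' a ha⟩
  refine ⟨(r / u) • f, ?_, fun y hy => ?_⟩
  · calc ‖(r / u) • f‖ = r / u * ‖f‖ := by
          rw [norm_smul, Real.norm_of_nonneg (div_pos hr0 hu).le]
      _ ≤ r / u * (u / r) := by gcongr
      _ = 1 := by field_simp
  · calc r = r / u * u := by field_simp
      _ ≤ r / u * f y := by gcongr; exact huK y hy
      _ = ((r / u) • f) y := rfl

theorem sInf_norm_le_norm_of_tendsto_apply {α : Type*} {l : Filter α} [l.NeBot] {x : α → E}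
    {η : StrongDual ℝ (StrongDual ℝ E)} (hx : ∀ φ : StrongDual ℝ E,
      Tendsto (fun t => φ (x t)) l (𝓝 (η φ)))
    {K : Set E} (hK : Convex ℝ K) (hxK : ∀ᶠ t in l, x t ∈ K) : sInf (norm '' K) ≤ ‖η‖ := by
  have hbdd : BddBelow (norm '' K) := ⟨0, by rintro _ ⟨y, -, rfl⟩; exact norm_nonneg y⟩
  obtain ⟨f, hf1, hfK⟩ :=
    exists_norm_le_one_forall_le_apply hK fun y hy => csInf_le hbdd (mem_image_of_mem _ hy)
  calc sInf (norm '' K) ≤ η f := ge_of_tendsto (hx f) (hxK.mono fun t ht => hfK _ ht)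
    _ ≤ ‖η f‖ := Real.le_norm_self _
    _ ≤ ‖η‖ * ‖f‖ := η.le_opNorm f
    _ ≤ ‖η‖ := mul_le_of_le_one_right (norm_nonneg η) hf1

end Separation

theorem tendsto_of_forall_mem_convexHull_Ici {ι : Type*} [Preorder ι]
    {E : Type*} [SeminormedAddCommGroup E] [NormedSpace ℝ E] {z w : ι → E} {a : E}
    (hz : Tendsto z atTop (𝓝 a)) (hw : ∀ t, w t ∈ convexHull ℝ (z '' Ici t)) :
    Tendsto w atTop (𝓝 a) := by
  rw [nhds_basis_ball.tendsto_right_iff] at hz ⊢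
  intro ε hε
  filter_upwards [eventually_forall_ge_atTop.2 (hz ε hε)] with t ht
  exact convexHull_min (by rintro _ ⟨j, hj, rfl⟩; exact ht j hj) (convex_ball a ε) (hw t)

theorem norm_le_of_tendsto_apply {𝕜 : Type*} [NontriviallyNormedField 𝕜] {E : Type*}
    [SeminormedAddCommGroup E] [NormedSpace 𝕜 E] {α : Type*} {l : Filter α} [l.NeBot]
    {y : α → E} {η : StrongDual 𝕜 (StrongDual 𝕜 E)}
    (hy : ∀ φ : StrongDual 𝕜 E, Tendsto (fun t => φ (y t)) l (𝓝 (η φ)))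
    {M : ℝ} (hM : ∀ᶠ t in l, ‖y t‖ ≤ M) : ‖η‖ ≤ M := by
  obtain ⟨t, ht⟩ := hM.exists
  refine η.opNorm_le_bound ((norm_nonneg _).trans ht) fun φ => le_of_tendsto (hy φ).norm ?_
  filter_upwards [hM] with t ht
  calc ‖φ (y t)‖ ≤ ‖φ‖ * ‖y t‖ := φ.le_opNorm _
    _ ≤ M * ‖φ‖ := by rw [mul_comm]; gcongr

theorem norm_le_of_forall_sInf_norm_convexHull_le {ι : Type*} [Preorder ι] [IsDirectedOrder ι]
    [Nonempty ι] {E : Type*} [SeminormedAddCommGroup E] [NormedSpace ℝ E] {x : ι → E}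
    {η : StrongDual ℝ (StrongDual ℝ E)}
    (hx : ∀ φ : StrongDual ℝ E, Tendsto (fun t => φ (x t)) atTop (𝓝 (η φ))) {M : ℝ}
    (hM : ∀ t, sInf (norm '' convexHull ℝ (x '' Ici t)) ≤ M) : ‖η‖ ≤ M := by
  refine le_of_forall_pos_le_add fun ε hε => ?_
  have hy : ∀ t, ∃ y ∈ convexHull ℝ (x '' Ici t), ‖y‖ < M + ε := fun t => by
    have hne : (norm '' convexHull ℝ (x '' Ici t)).Nonempty :=
      ⟨_, mem_image_of_mem _ (subset_convexHull ℝ _ ⟨t, self_mem_Ici, rfl⟩)⟩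
    obtain ⟨_, ⟨y, hy, rfl⟩, hlt⟩ :=
      exists_lt_of_csInf_lt hne ((hM t).trans_lt (lt_add_of_pos_right M hε))
    exact ⟨y, hy, hlt⟩
  choose y hyK hyM using hy
  refine norm_le_of_tendsto_apply (fun φ => tendsto_of_forall_mem_convexHull_Ici (hx φ)
    fun t => ?_) (Eventually.of_forall fun t => (hyM t).le)
  have := (φ : E →ₗ[ℝ] ℝ).image_convexHull (x '' Ici t) ▸ mem_image_of_mem φ (hyK t)
  simpa only [ContinuousLinearMap.coe_coe, image_image] using this

theorem monotone_sInf_norm_convexHull_Ici {ι : Type*} [Preorder ι] {E : Type*}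
    [SeminormedAddCommGroup E] [NormedSpace ℝ E] (x : ι → E) :
    Monotone fun t => sInf (norm '' convexHull ℝ (x '' Ici t)) := fun s t hst =>
  csInf_le_csInf ⟨0, by rintro _ ⟨y, -, rfl⟩; exact norm_nonneg y⟩
    ⟨_, mem_image_of_mem _ (subset_convexHull ℝ _ ⟨t, self_mem_Ici, rfl⟩)⟩
    (image_mono (convexHull_mono (image_mono (Ici_subset_Ici.2 hst))))

theorem norm_eq_limit_inf_convexHull_general
    {X : Type*} [NormedAddCommGroup X] [NormedSpace ℝ X]
    {ι : Type*} [Nonempty ι] [SemilatticeSup ι]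
    (x : ι → X)
    (η : StrongDual ℝ (StrongDual ℝ X))
    (hw : ∀ φ : StrongDual ℝ X,
      Tendsto (fun t => φ (x t)) atTop (nhds (η φ))) :
    Tendsto (fun t => sInf (norm '' (convexHull ℝ (x '' Set.Ici t)))) atTop (nhds ‖η‖) := by
  set D : ι → ℝ := fun t => sInf (norm '' (convexHull ℝ (x '' Set.Ici t)))
  have hDη : ∀ t, D t ≤ ‖η‖ := fun t => sInf_norm_le_norm_of_tendsto_apply hw
    (convex_convexHull ℝ _) ((eventually_ge_atTop t).mono fun j hj =>
      subset_convexHull ℝ _ ⟨j, hj, rfl⟩)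
  have hbdd : BddAbove (range D) := ⟨‖η‖, forall_mem_range.2 hDη⟩
  have hsup : ⨆ t, D t = ‖η‖ := le_antisymm (ciSup_le hDη)
    (norm_le_of_forall_sInf_norm_convexHull_le hw fun t => le_ciSup hbdd t)
  exact hsup ▸ tendsto_atTop_ciSup (monotone_sInf_norm_convexHull_Ici x) hbdd

/-- Let `X` be a Banach space and `(x t)` a bounded net in `X` converging
weak* to an element `η` of `X**`.  Then `‖η‖` equals the limit over `t` of the infimum of the
norms of elements of the convex hull of `{x j : j ≥ t}`. -/
theorem norm_eq_limit_inf_convexHull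
    {X : Type*} [NormedAddCommGroup X] [NormedSpace ℝ X] [CompleteSpace X]
    {ι : Type*} [Nonempty ι] [SemilatticeSup ι]
    (x : ι → X) (C : ℝ) (hbdd : ∀ t, ‖x t‖ ≤ C)
    (η : StrongDual ℝ (StrongDual ℝ X))
    (hw : ∀ φ : StrongDual ℝ X,
      Tendsto (fun t => φ (x t)) atTop (nhds (η φ))) :
    Tendsto (fun t => sInf (norm '' (convexHull ℝ (x '' Set.Ici t)))) atTop (nhds ‖η‖) :=
  norm_eq_limit_inf_convexHull_general x η hw
end

section
/- In a unital Banach algebra, if x satisfies ‖1 − x‖ ≤ 1, then the element x^{1/n} defined by the binomial series satisfies (x^{1/n})^n = x for every positive integer n. -/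
/-- The generalized binomial coefficient `C(t, k) = t(t-1)⋯(t-k+1)/k!`. -/
noncomputable def gbinom (t : ℝ) (k : ℕ) : ℝ :=
  (∏ i ∈ Finset.range k, (t - i)) / (Nat.factorial k : ℝ)

/-- The `t`-th power of `x` defined by the binomial series
`x^t = Σ_{k≥0} C(t,k)(−1)^k (1−x)^k`. -/
noncomputable def binomPow {A : Type*} [NormedRing A] [NormedSpace ℝ A]
    (x : A) (t : ℝ) : A :=
  ∑' k : ℕ, ((gbinom t k) * (-1 : ℝ) ^ k) • (1 - x) ^ k

/-!
For `t > 0` the coefficients satisfy `t |C(t, k)| = k |C(t, k)| - (k + 1) |C(t, k + 1)|` once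
`k ≥ t`, so `Σ |C(t, k)|` telescopes to a finite bound and the series for `x^t` converges
absolutely when `‖1 - x‖ ≤ 1`. The Cauchy product of the series for `x^s` and `x^t` is then the
series for `x^(s+t)` by the Chu–Vandermonde identity, whence `(x^(1/n))^n = x^1`; for a natural
exponent the series is the finite binomial expansion of `(1 - (1 - x))^n`.
-/

open Finset

theorem gbinom_eq_choose (t : ℝ) (k : ℕ) : gbinom t k = Ring.choose t k := by
  rw [gbinom, Ring.choose_eq_smul, ← Polynomial.eval₂_smulOneHom_eq_smeval,
    ← Polynomial.eval_map, descPochhammer_map, descPochhammer_eval_eq_prod_range,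
    smul_eq_mul, div_eq_inv_mul]

theorem gbinom_succ (t : ℝ) (k : ℕ) :
    gbinom t (k + 1) = gbinom t k * (t - k) / (k + 1) := by
  rw [gbinom, gbinom, prod_range_succ, Nat.factorial_succ]
  push_cast
  field_simp

theorem gbinom_natCast (n k : ℕ) : gbinom n k = n.choose k := by
  rw [gbinom_eq_choose, Ring.choose_natCast]

theorem gbinom_add (s t : ℝ) (k : ℕ) :
    gbinom (s + t) k = ∑ ij ∈ antidiagonal k, gbinom s ij.1 * gbinom t ij.2 := by
  simp only [gbinom_eq_choose]
  exact Ring.add_choose_eq k (Commute.all s t)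

theorem summable_abs_gbinom {t : ℝ} (ht : 0 < t) : Summable fun k ↦ |gbinom t k| := by
  set K := ⌈t⌉₊
  set c : ℕ → ℝ := fun k ↦ |gbinom t k|
  set f : ℕ → ℝ := fun k ↦ k * c k
  have telescope : ∀ k, K ≤ k → t * c k = f k - f (k + 1) := by
    intro k hk
    have hkt : t ≤ k := (Nat.le_ceil t).trans (by exact_mod_cast hk)
    simp only [f, c, gbinom_succ, abs_div, abs_mul, abs_sub_comm t,
      abs_of_nonneg (sub_nonneg.2 hkt)]
    push_cast
    rw [abs_of_pos (by positivity : (0 : ℝ) < k + 1)]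
    field_simp
    ring
  have hbound : ∀ N, ∑ m ∈ range N, c (m + K) ≤ f K / t := by
    intro N
    rw [le_div_iff₀ ht, sum_mul]
    calc ∑ m ∈ range N, c (m + K) * t = ∑ m ∈ range N, (f (m + K) - f (m + 1 + K)) :=
          sum_congr rfl fun m _ ↦ by
            rw [mul_comm, telescope _ (Nat.le_add_left K m), add_right_comm]
      _ = f K - f (N + K) := by simpa using sum_range_sub' (fun m ↦ f (m + K)) N
      _ ≤ f K := sub_le_self _ (by positivity)
  exact (summable_nat_add_iff K).mp (summable_of_sum_range_le (fun _ ↦ abs_nonneg _) hbound)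

section BinomPow

variable {A : Type*} [NormedRing A] [NormedAlgebra ℝ A]

theorem binomPow_natCast (x : A) (n : ℕ) : binomPow x n = x ^ n := by
  have hvanish : ∀ k ∉ range (n + 1), (gbinom n k * (-1 : ℝ) ^ k) • (1 - x) ^ k = 0 := by
    intro k hk
    rw [gbinom_natCast, Nat.choose_eq_zero_of_lt (by simpa using hk)]
    simp
  rw [binomPow, tsum_eq_sum hvanish]
  calc ∑ k ∈ range (n + 1), (gbinom n k * (-1 : ℝ) ^ k) • (1 - x) ^ k
      = ∑ k ∈ range (n + 1), (x - 1) ^ k * 1 ^ (n - k) * (n.choose k : A) := by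
        refine sum_congr rfl fun k _ ↦ ?_
        rw [gbinom_natCast, mul_smul, ← smul_pow, neg_one_smul, neg_sub, Nat.cast_smul_eq_nsmul,
          nsmul_eq_mul, one_pow, mul_one, Nat.cast_comm]
    _ = x ^ n := by rw [← (Commute.one_right _).add_pow, sub_add_cancel]

theorem summable_norm_binomPow_term {x : A} (hx : ‖1 - x‖ ≤ 1) {t : ℝ} (ht : 0 < t) :
    Summable fun k ↦ ‖(gbinom t k * (-1 : ℝ) ^ k) • (1 - x) ^ k‖ := by
  refine (summable_nat_add_iff 1).mp <| ((summable_nat_add_iff 1).mpr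
    (summable_abs_gbinom ht)).of_nonneg_of_le (fun _ ↦ norm_nonneg _) fun k ↦ ?_
  rw [norm_smul, norm_mul, norm_pow, norm_neg, norm_one, one_pow, mul_one, Real.norm_eq_abs]
  exact mul_le_of_le_one_right (abs_nonneg _)
    ((norm_pow_le' _ k.succ_pos).trans (pow_le_one₀ (norm_nonneg _) hx))

variable [CompleteSpace A]

theorem binomPow_mul_binomPow {x : A} (hx : ‖1 - x‖ ≤ 1) {s t : ℝ} (hs : 0 < s) (ht : 0 < t) :
    binomPow x s * binomPow x t = binomPow x (s + t) := by
  rw [binomPow, binomPow, binomPow, tsum_mul_tsum_eq_tsum_sum_antidiagonal_of_summable_norm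
    (summable_norm_binomPow_term hx hs) (summable_norm_binomPow_term hx ht)]
  refine tsum_congr fun k ↦ ?_
  rw [gbinom_add, sum_mul, sum_smul]
  refine sum_congr rfl fun ij hij ↦ ?_
  rw [smul_mul_smul_comm, ← pow_add, mem_antidiagonal.mp hij, mul_mul_mul_comm, ← pow_add,
    mem_antidiagonal.mp hij]

theorem binomPow_pow {x : A} (hx : ‖1 - x‖ ≤ 1) {t : ℝ} (ht : 0 < t) {m : ℕ} (hm : m ≠ 0) :
    binomPow x t ^ m = binomPow x (m * t) := by
  rw [← Nat.one_le_iff_ne_zero] at hm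
  induction m, hm using Nat.le_induction with
  | base => simp
  | succ m _ ih =>
    rw [pow_succ, ih, binomPow_mul_binomPow hx (by positivity) ht, Nat.cast_succ, add_one_mul]

end BinomPow

theorem binomPow_nthRoot_pow_general
    {A : Type*} [NormedRing A] [NormedAlgebra ℂ A] [CompleteSpace A]
    (x : A) (hx : ‖1 - x‖ ≤ 1) (n : ℕ) (hn : 0 < n) :
    (binomPow x (1 / (n : ℝ))) ^ n = x := by
  have hn' : (n : ℝ) ≠ 0 := by positivity
  rw [binomPow_pow hx (by positivity) hn.ne', mul_one_div_cancel hn', ← Nat.cast_one,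
    binomPow_natCast, pow_one]

/-- In a unital Banach algebra, if `‖1 − x‖ ≤ 1`, then the element
`x^{1/n}` defined by the binomial series satisfies `(x^{1/n})^n = x` for every positive
integer `n`. -/
theorem binomPow_nthRoot_pow
    {A : Type*} [NormedRing A] [NormedAlgebra ℂ A] [NormOneClass A] [CompleteSpace A]
    (x : A) (hx : ‖1 - x‖ ≤ 1) (n : ℕ) (hn : 0 < n) :
    (binomPow x (1 / (n : ℝ))) ^ n = x :=
  binomPow_nthRoot_pow_general x hx n hn
end

section
/- Let A be a unital Banach algebra and x ∈ A an element whose numerical range lies in the closed right half plane (i.e., Re φ(x) ≥ 0 for every norm-one functional φ with φ(1) = 1). Then for every ε > 0, the element x + ε1 lies in C·{a : ‖1 − a‖ ≤ 1} where C = ‖x‖²/ε + ε. -/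
/-!
If `ψ` is a norming functional of `u = 1 - t x` (so `‖ψ‖ ≤ 1`, `ψ u = ‖u‖`), then
`y ↦ ψ (y u) / ‖u‖` is a state, hence `0 ≤ Re ψ (x u) = Re ψ x - t Re ψ (x²)`. Therefore
`‖u‖ = Re ψ 1 - t Re ψ x ≤ 1 + t² ‖x‖²`. Rescaling with `t = ε / ‖x‖²` gives
`‖K - x‖ ≤ K + ε` for `K = ‖x‖² / ε`, and `a = (x + ε) / (K + ε)` is the required element.
-/

open ContinuousLinearMap RCLike

section

variable (𝕜 : Type*) {A : Type*} [RCLike 𝕜] [NormedRing A] [NormedAlgebra 𝕜 A]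

def IsAccretive (x : A) : Prop :=
  ∀ φ : StrongDual 𝕜 A, ‖φ‖ = 1 → φ 1 = 1 → 0 ≤ re (φ x)

variable {𝕜}

lemma abs_re_apply_le_norm {ψ : StrongDual 𝕜 A} (hψ : ‖ψ‖ ≤ 1) (y : A) : |re (ψ y)| ≤ ‖y‖ :=
  calc |re (ψ y)| ≤ ‖ψ y‖ := abs_re_le_norm _
    _ ≤ ‖ψ‖ * ‖y‖ := ψ.le_opNorm y
    _ ≤ ‖y‖ := mul_le_of_le_one_left (norm_nonneg y) hψ

variable [NormOneClass A]

lemma IsAccretive.re_apply_mul_nonneg {x : A} (hx : IsAccretive 𝕜 x) {ψ : StrongDual 𝕜 A}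
    (hψ : ‖ψ‖ ≤ 1) {u : A} (hψu : ψ u = ‖u‖) : 0 ≤ re (ψ (x * u)) := by
  rcases eq_or_ne u 0 with rfl | hu
  · simp
  have hu' : 0 < ‖u‖ := norm_pos_iff.2 hu
  set φ : StrongDual 𝕜 A := ((‖u‖⁻¹ : ℝ) : 𝕜) • ψ.comp ((mul 𝕜 A).flip u)
  have hφ_apply (y : A) : φ y = ((‖u‖⁻¹ : ℝ) : 𝕜) * ψ (y * u) := rfl
  have hφ_one : φ 1 = 1 := by
    rw [hφ_apply, one_mul, hψu, ← ofReal_mul, inv_mul_cancel₀ hu'.ne', ofReal_one]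
  have hφ_norm : ‖φ‖ = 1 := by
    refine le_antisymm (opNorm_le_bound _ zero_le_one fun y ↦ ?_) ?_
    · rw [hφ_apply, norm_mul, norm_ofReal, abs_inv, abs_norm, one_mul,
        inv_mul_le_iff₀ hu']
      calc ‖ψ (y * u)‖ ≤ ‖ψ‖ * ‖y * u‖ := ψ.le_opNorm _
        _ ≤ 1 * (‖y‖ * ‖u‖) := by gcongr; exact norm_mul_le _ _
        _ = ‖u‖ * ‖y‖ := by ring
    · simpa [hφ_one] using φ.le_opNorm 1
  have := hx φ hφ_norm hφ_one
  rw [hφ_apply, re_ofReal_mul] at this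
  exact nonneg_of_mul_nonneg_right this (inv_pos.2 hu')

lemma IsAccretive.norm_one_sub_smul_le {x : A} (hx : IsAccretive 𝕜 x) {t : ℝ} (ht : 0 ≤ t) :
    ‖1 - (t : 𝕜) • x‖ ≤ 1 + t ^ 2 * ‖x‖ ^ 2 := by
  obtain ⟨ψ, hψ, hψu⟩ := exists_dual_vector'' 𝕜 (1 - (t : 𝕜) • x)
  have hre (y z : A) : re (ψ (y - (t : 𝕜) • z)) = re (ψ y) - t * re (ψ z) := by
    rw [map_sub, map_smul, smul_eq_mul, map_sub, re_ofReal_mul]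
  have hxu : 0 ≤ re (ψ x) - t * re (ψ (x * x)) := by
    simpa only [mul_sub, mul_one, mul_smul_comm, hre] using hx.re_apply_mul_nonneg hψ hψu
  have h1 : re (ψ 1) ≤ 1 := by simpa using (abs_le.1 (abs_re_apply_le_norm hψ 1)).2
  have hxx : -‖x‖ ^ 2 ≤ re (ψ (x * x)) := by
    have := (abs_re_apply_le_norm hψ (x * x)).trans (norm_mul_le x x)
    nlinarith [abs_le.1 this]
  calc ‖1 - (t : 𝕜) • x‖ = re (ψ 1) - t * re (ψ x) := by rw [← hre, hψu, ofReal_re]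
    _ ≤ 1 - t * (t * re (ψ (x * x))) := by gcongr; linarith
    _ ≤ 1 + t ^ 2 * ‖x‖ ^ 2 := by nlinarith [mul_le_mul_of_nonneg_left hxx (mul_nonneg ht ht)]

lemma IsAccretive.norm_smul_one_sub_le {x : A} (hx : IsAccretive 𝕜 x) {s : ℝ} (hs : 0 < s) :
    ‖(s : 𝕜) • 1 - x‖ ≤ s + ‖x‖ ^ 2 / s := by
  have hsx : (s : 𝕜) • 1 - x = (s : 𝕜) • (1 - ((s⁻¹ : ℝ) : 𝕜) • x) := by
    rw [smul_sub, smul_smul, ofReal_inv, mul_inv_cancel₀ (ofReal_ne_zero.2 hs.ne'), one_smul]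
  calc ‖(s : 𝕜) • 1 - x‖ = s * ‖1 - ((s⁻¹ : ℝ) : 𝕜) • x‖ := by
        rw [hsx, norm_smul, norm_ofReal, abs_of_pos hs]
    _ ≤ s * (1 + s⁻¹ ^ 2 * ‖x‖ ^ 2) := by gcongr; exact hx.norm_one_sub_smul_le (by positivity)
    _ = s + ‖x‖ ^ 2 / s := by field_simp

lemma IsAccretive.exists_add_smul_one_eq_smul {x : A} (hx : IsAccretive 𝕜 x) {ε : ℝ}
    (hε : 0 < ε) :
    ∃ a : A, ‖1 - a‖ ≤ 1 ∧ x + (ε : 𝕜) • 1 = ((‖x‖ ^ 2 / ε + ε : ℝ) : 𝕜) • a := by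
  set K := ‖x‖ ^ 2 / ε
  set C := K + ε
  have hC : 0 < C := by positivity
  have hC' : (C : 𝕜) ≠ 0 := ofReal_ne_zero.2 hC.ne'
  have hK : ‖(K : 𝕜) • 1 - x‖ ≤ C := by
    rcases eq_or_ne x 0 with rfl | hx0
    · simp [K, C, hε.le]
    · have hK_pos : 0 < K := by positivity
      have hεK : ‖x‖ ^ 2 / K = ε := div_div_cancel₀ (pow_ne_zero 2 (norm_ne_zero_iff.2 hx0))
      simpa only [hεK] using hx.norm_smul_one_sub_le hK_pos
  refine ⟨(C : 𝕜)⁻¹ • (x + (ε : 𝕜) • 1), ?_, by rw [smul_inv_smul₀ hC']⟩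
  have hsub : 1 - (C : 𝕜)⁻¹ • (x + (ε : 𝕜) • 1) = (C : 𝕜)⁻¹ • ((K : 𝕜) • 1 - x) := by
    have : (C : 𝕜)⁻¹ * C = 1 := inv_mul_cancel₀ hC'
    simp only [C, ofReal_add] at this ⊢
    linear_combination (norm := module) -this • (1 : A)
  rw [hsub, norm_smul, norm_inv, norm_ofReal, abs_of_pos hC]
  exact inv_mul_le_one_of_le₀ hK hC.le

end

theorem accretive_add_eps_mem_smul_FSet_general
    {A : Type*} [NormedRing A] [NormedAlgebra ℂ A] [NormOneClass A]
    (x : A)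
    (hacc : ∀ φ : StrongDual ℂ A, ‖φ‖ = 1 → φ 1 = 1 → 0 ≤ (φ x).re)
    (ε : ℝ) (hε : 0 < ε) :
    ∃ a : A, ‖1 - a‖ ≤ 1 ∧ x + ε • (1 : A) = (‖x‖ ^ 2 / ε + ε) • a := by
  have hx : IsAccretive ℂ x := hacc
  simpa only [← RCLike.real_smul_eq_coe_smul (K := ℂ)] using hx.exists_add_smul_one_eq_smul hε

/-- Let `A` be a unital Banach algebra and `x ∈ A` an element whose
numerical range lies in the closed right half plane (i.e. `Re φ(x) ≥ 0` for every state
`φ`).  Then for every `ε > 0` the element `x + ε·1` lies in `C · {a : ‖1 − a‖ ≤ 1}`,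
where `C = ‖x‖²/ε + ε`. -/
theorem accretive_add_eps_mem_smul_FSet
    {A : Type*} [NormedRing A] [NormedAlgebra ℂ A] [NormOneClass A] [CompleteSpace A]
    (x : A)
    (hacc : ∀ φ : StrongDual ℂ A, ‖φ‖ = 1 → φ 1 = 1 → 0 ≤ (φ x).re)
    (ε : ℝ) (hε : 0 < ε) :
    ∃ a : A, ‖1 - a‖ ≤ 1 ∧ x + ε • (1 : A) = (‖x‖ ^ 2 / ε + ε) • a :=
  accretive_add_eps_mem_smul_FSet_general x hacc ε hε
end

section
/- Let A be a unital Banach algebra and p ∈ A an idempotent. Then ‖1 − p‖ ≤ 1 if and only if p is accretive (its numerical range lies in the closed right half plane). -/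
/-!
For `x` in a unital normed algebra, the difference quotient `(‖1 + t • x‖ - 1) / t` decreases
as `t ↓ 0` to the logarithmic norm `ν(x)`, a sublinear functional dominated by the norm. By
Hahn–Banach some real functional `g ≤ ν` attains `ν(a)`; complexifying `g` gives a state `φ` with
`Re φ(a) = ν(a)`, so an accretive `p` has `ν(-p) ≤ 0`. For an idempotent,
`(1 - s • p) ^ n = 1 - (1 - (1 - s) ^ n) • p`, whence
`‖1 - (1 - e^{-K}) • p‖ = lim ‖(1 - (K / n) • p) ^ n‖ ≤ lim (1 + c K / n) ^ n = e^{c K}` for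
every `c > ν(-p)`; letting `c ↓ 0` and then `K → ∞` gives `‖1 - p‖ ≤ 1`. The converse is
`Re φ(1 - p) ≤ ‖1 - p‖`.
-/

open Filter Topology Set

section LogNorm

variable {A : Type*} [NormedRing A] [NormedAlgebra ℝ A]

noncomputable def logNormQuotient (x : A) (t : ℝ) : ℝ := (‖1 + t • x‖ - 1) / t

/-- The logarithmic norm `lim_{t → 0⁺} (‖1 + t • x‖ - 1) / t`, written as an infimum since the
quotient is monotone in `t`. -/
noncomputable def logNorm (x : A) : ℝ := sInf (logNormQuotient x '' Ioi 0)

theorem logNormQuotient_smul {c : ℝ} (hc : c ≠ 0) (x : A) (t : ℝ) :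
    logNormQuotient (c • x) t = c * logNormQuotient x (c * t) := by
  rw [logNormQuotient, logNormQuotient, smul_smul, mul_comm t c]
  field_simp

variable [NormOneClass A]

theorem logNorm_zero : logNorm (0 : A) = 0 := by
  have h : logNormQuotient (0 : A) = fun _ ↦ 0 := by ext; simp [logNormQuotient]
  rw [logNorm, h, nonempty_Ioi.image_const, csInf_singleton]

theorem logNormQuotient_mono (x : A) {s t : ℝ} (hs : 0 < s) (hst : s ≤ t) :
    logNormQuotient x s ≤ logNormQuotient x t := by
  have ht := hs.trans_le hst
  have key : t * ‖1 + s • x‖ ≤ s * ‖1 + t • x‖ + (t - s) :=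
    calc t * ‖1 + s • x‖ = ‖s • (1 + t • x) + (t - s) • (1 : A)‖ := by
          rw [← norm_smul_of_nonneg ht.le]; congr 1; module
      _ ≤ s * ‖1 + t • x‖ + (t - s) := by
          refine (norm_add_le _ _).trans_eq ?_
          rw [norm_smul_of_nonneg hs.le, norm_smul_of_nonneg (sub_nonneg.2 hst), norm_one,
            mul_one]
  rw [logNormQuotient, logNormQuotient, div_le_div_iff₀ hs ht]
  nlinarith

theorem neg_norm_le_logNormQuotient (x : A) {t : ℝ} (ht : 0 < t) :
    -‖x‖ ≤ logNormQuotient x t := by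
  have h := norm_sub_le (1 + t • x) (t • x)
  rw [add_sub_cancel_right, norm_one, norm_smul_of_nonneg ht.le] at h
  rw [logNormQuotient, le_div_iff₀ ht]
  linarith

theorem bddBelow_logNormQuotient_image (x : A) : BddBelow (logNormQuotient x '' Ioi 0) := by
  refine ⟨-‖x‖, ?_⟩
  rintro _ ⟨t, ht, rfl⟩
  exact neg_norm_le_logNormQuotient x ht

theorem logNorm_le_logNormQuotient (x : A) {t : ℝ} (ht : 0 < t) :
    logNorm x ≤ logNormQuotient x t :=
  csInf_le (bddBelow_logNormQuotient_image x) ⟨t, ht, rfl⟩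

theorem tendsto_logNormQuotient (x : A) :
    Tendsto (logNormQuotient x) (𝓝[>] 0) (𝓝 (logNorm x)) :=
  MonotoneOn.tendsto_nhdsGT (fun _ hs _ _ hst ↦ logNormQuotient_mono x hs hst)
    (bddBelow_logNormQuotient_image x)

theorem logNorm_le_norm (x : A) : logNorm x ≤ ‖x‖ := by
  refine (logNorm_le_logNormQuotient x one_pos).trans ?_
  rw [logNormQuotient, one_smul, div_one, sub_le_iff_le_add', ← norm_one (α := A)]
  exact norm_add_le _ _

theorem logNorm_neg_one_le : logNorm (-1 : A) ≤ -1 := by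
  refine (logNorm_le_logNormQuotient (-1) one_half_pos).trans_eq ?_
  have h : (1 : A) + (1 / 2 : ℝ) • (-1) = (1 / 2 : ℝ) • 1 := by module
  rw [logNormQuotient, h, norm_smul_of_nonneg one_half_pos.le, norm_one]
  norm_num

theorem logNorm_add (x y : A) : logNorm (x + y) ≤ logNorm x + logNorm y := by
  refine ge_of_tendsto ((tendsto_logNormQuotient x).add (tendsto_logNormQuotient y))
    (eventually_nhdsWithin_of_forall fun t (ht : 0 < t) ↦ ?_)
  -- `1 + (t / 2) • (x + y)` is the midpoint of `1 + t • x` and `1 + t • y`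
  have key : 2 * ‖1 + (t / 2) • (x + y)‖ ≤ ‖1 + t • x‖ + ‖1 + t • y‖ :=
    calc 2 * ‖1 + (t / 2) • (x + y)‖ = ‖(1 + t • x) + (1 + t • y)‖ := by
          rw [← norm_smul_of_nonneg zero_le_two]; congr 1; module
      _ ≤ _ := norm_add_le _ _
  refine (logNorm_le_logNormQuotient (x + y) (half_pos ht)).trans ?_
  rw [logNormQuotient, logNormQuotient, logNormQuotient, ← add_div,
    div_le_div_iff₀ (half_pos ht) ht]
  nlinarith

theorem logNorm_smul {c : ℝ} (hc : 0 < c) (x : A) : logNorm (c • x) = c * logNorm x := by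
  have hmul : Tendsto (c * ·) (𝓝[>] (0 : ℝ)) (𝓝[>] 0) :=
    tendsto_nhdsWithin_iff.2 ⟨tendsto_nhdsWithin_of_tendsto_nhds
      (by simpa using (continuous_const_mul c).tendsto 0),
      eventually_nhdsWithin_of_forall fun t (ht : 0 < t) ↦ mul_pos hc ht⟩
  refine tendsto_nhds_unique (tendsto_logNormQuotient (c • x)) ?_
  exact (((tendsto_logNormQuotient x).comp hmul).const_mul c).congr fun t ↦
    (logNormQuotient_smul hc.ne' x t).symm

theorem mul_logNorm_le_logNorm_smul (c : ℝ) (x : A) : c * logNorm x ≤ logNorm (c • x) := by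
  rcases lt_trichotomy c 0 with hc | rfl | hc
  · have hx : 0 ≤ logNorm x + logNorm (-x) := by
      simpa [logNorm_zero] using logNorm_add x (-x)
    rw [show c • x = (-c) • -x by module, logNorm_smul (neg_pos.2 hc)]
    nlinarith
  · simp [logNorm_zero]
  · rw [logNorm_smul hc]

end LogNorm

theorem exists_linearMap_le_logNorm {A : Type*} [NormedRing A] [NormedAlgebra ℝ A]
    [NormOneClass A] (a : A) :
    ∃ g : A →ₗ[ℝ] ℝ, g a = logNorm a ∧ ∀ x, g x ≤ logNorm x := by
  let f : A →ₗ.[ℝ] ℝ := LinearPMap.mkSpanSingleton' a (logNorm a) fun c hc ↦ by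
    rcases smul_eq_zero.1 hc with rfl | rfl
    · exact zero_smul ℝ _
    · rw [logNorm_zero, smul_zero]
  obtain ⟨g, hgf, hg⟩ := exists_extension_of_le_sublinear f logNorm
    (fun c hc x ↦ logNorm_smul hc x) logNorm_add <| by
      rintro ⟨x, hx⟩
      obtain ⟨c, rfl⟩ := Submodule.mem_span_singleton.1 hx
      rw [LinearPMap.mkSpanSingleton'_apply, RingHom.id_apply, smul_eq_mul]
      exact mul_logNorm_le_logNorm_smul c a
  exact ⟨g, (hgf ⟨a, Submodule.mem_span_singleton_self a⟩).trans
    (LinearPMap.mkSpanSingleton'_apply_self _ _ _ _), hg⟩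

theorem exists_state_re_eq_logNorm {A : Type*} [NormedRing A] [NormedAlgebra ℂ A]
    [NormOneClass A] (a : A) :
    ∃ φ : StrongDual ℂ A, ‖φ‖ = 1 ∧ φ 1 = 1 ∧ (φ a).re = logNorm a := by
  obtain ⟨g, hga, hg⟩ := exists_linearMap_le_logNorm a
  have hg_bound : ∀ x, ‖g x‖ ≤ 1 * ‖x‖ := fun x ↦ by
    have h := (hg (-x)).trans (logNorm_le_norm (-x))
    rw [map_neg, norm_neg] at h
    rw [one_mul, Real.norm_eq_abs, abs_le]
    exact ⟨by linarith, (hg x).trans (logNorm_le_norm x)⟩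
  let G : StrongDual ℝ A := g.mkContinuous 1 hg_bound
  let φ : StrongDual ℂ A := G.extendRCLike
  have hφ : ‖φ‖ ≤ 1 :=
    (StrongDual.norm_extendRCLike G).trans_le (LinearMap.mkContinuous_norm_le g zero_le_one _)
  have hg_one : g 1 = 1 := by
    have h1 := (hg 1).trans (logNorm_le_norm 1)
    have h2 := (hg (-1)).trans logNorm_neg_one_le
    rw [norm_one] at h1
    rw [map_neg] at h2
    linarith
  have hφ_re (x : A) : (φ x).re = g x := StrongDual.re_extendRCLike_apply (𝕜 := ℂ) G x
  have hφ_im (x : A) : (φ x).im = -g (Complex.I • x) :=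
    StrongDual.im_extendRCLike_apply (𝕜 := ℂ) G x
  -- `φ 1 = 1 - I g(I • 1)` has modulus at most `1`, which forces `g (I • 1) = 0`
  have hφ_one : φ 1 = 1 := by
    have h := (φ.le_opNorm 1).trans (by simpa using hφ)
    rw [← sq_le_one_iff₀ (norm_nonneg _), Complex.sq_norm, Complex.normSq_apply, hφ_re,
      hg_one, hφ_im] at h
    apply Complex.ext
    · rw [hφ_re, hg_one, Complex.one_re]
    · rw [hφ_im, Complex.one_im]
      nlinarith
  refine ⟨φ, le_antisymm hφ ?_, hφ_one, hφ_re a |>.trans hga⟩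
  simpa [hφ_one] using φ.le_opNorm 1

theorem IsIdempotentElem.one_sub_smul_pow {A : Type*} [Ring A] [Algebra ℝ A] {p : A}
    (hp : IsIdempotentElem p) (s : ℝ) (n : ℕ) :
    (1 - s • p) ^ n = 1 - (1 - (1 - s) ^ n) • p := by
  induction n with
  | zero => simp
  | succ n ih =>
    rw [pow_succ, ih, sub_mul, mul_sub, mul_sub, smul_mul_smul_comm, hp.eq]
    simp only [one_mul, mul_one]
    module

section Idempotent

variable {A : Type*} [NormedRing A] [NormedAlgebra ℝ A] [NormOneClass A] {p : A}

theorem IsIdempotentElem.norm_one_sub_smul_le_exp (hp : IsIdempotentElem p) {c : ℝ}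
    (hc : logNorm (-p) < c) {K : ℝ} (hK : 0 < K) :
    ‖1 - (1 - Real.exp (-K)) • p‖ ≤ Real.exp (c * K) := by
  have hs : Tendsto (fun n : ℕ ↦ K / n) atTop (𝓝[>] 0) :=
    tendsto_nhdsWithin_iff.2 ⟨tendsto_const_div_atTop_nhds_zero_nat K,
      (eventually_gt_atTop 0).mono fun n hn ↦ div_pos hK (Nat.cast_pos.2 hn)⟩
  have hq : ∀ᶠ n : ℕ in atTop, logNormQuotient (-p) (K / n) < c :=
    hs.eventually ((tendsto_logNormQuotient (-p)).eventually (gt_mem_nhds hc))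
  have hlim : Tendsto (fun n : ℕ ↦ ‖1 - (1 - (1 + -K / n) ^ n) • p‖) atTop
      (𝓝 ‖1 - (1 - Real.exp (-K)) • p‖) :=
    (((Real.tendsto_one_add_div_pow_exp (-K)).const_sub 1).smul_const p |>.const_sub 1).norm
  refine le_of_tendsto_of_tendsto hlim (Real.tendsto_one_add_div_pow_exp (c * K)) ?_
  filter_upwards [hq, hs.eventually self_mem_nhdsWithin] with n hn (hn₀ : 0 < K / n)
  have hstep : ‖1 - (K / n) • p‖ ≤ 1 + c * K / n := by
    rw [logNormQuotient, smul_neg, ← sub_eq_add_neg, div_lt_iff₀ hn₀] at hn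
    rw [mul_div_assoc]
    linarith
  calc ‖1 - (1 - (1 + -K / n) ^ n) • p‖ = ‖(1 - (K / n) • p) ^ n‖ := by
        rw [hp.one_sub_smul_pow, neg_div, ← sub_eq_add_neg]
    _ ≤ ‖1 - (K / n) • p‖ ^ n := norm_pow_le _ n
    _ ≤ (1 + c * K / n) ^ n := pow_le_pow_left₀ (norm_nonneg _) hstep n

theorem IsIdempotentElem.norm_one_sub_le_one (hp : IsIdempotentElem p)
    (h : logNorm (-p) ≤ 0) : ‖1 - p‖ ≤ 1 := by
  have hexp : ∀ K > 0, ‖1 - (1 - Real.exp (-K)) • p‖ ≤ 1 := fun K hK ↦ by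
    have hlim : Tendsto (fun c ↦ Real.exp (c * K)) (𝓝[>] 0) (𝓝 1) := by
      have h : Tendsto (· * K) (𝓝[>] (0 : ℝ)) (𝓝 0) := by
        simpa using ((continuous_mul_const K).tendsto 0).mono_left nhdsWithin_le_nhds
      simpa using h.rexp
    exact ge_of_tendsto hlim <| eventually_nhdsWithin_of_forall fun c (hc : 0 < c) ↦
      hp.norm_one_sub_smul_le_exp (h.trans_lt hc) hK
  have hlim : Tendsto (fun K ↦ ‖1 - (1 - Real.exp (-K)) • p‖) atTop (𝓝 ‖1 - p‖) := by
    simpa using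
      (((Real.tendsto_exp_neg_atTop_nhds_zero.const_sub 1).smul_const p).const_sub 1).norm
  exact le_of_tendsto hlim ((eventually_gt_atTop 0).mono hexp)

end Idempotent

theorem idempotent_norm_one_sub_le_one_iff_accretive_general
    {A : Type*} [NormedRing A] [NormedAlgebra ℂ A] [NormOneClass A]
    (p : A) (hp : p * p = p) :
    ‖1 - p‖ ≤ 1 ↔
      ∀ φ : StrongDual ℂ A, ‖φ‖ = 1 → φ 1 = 1 → 0 ≤ (φ p).re := by
  refine ⟨fun h φ hφ hφ_one ↦ ?_, fun h ↦ IsIdempotentElem.norm_one_sub_le_one hp ?_⟩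
  · have : 1 - (φ p).re ≤ 1 :=
      calc 1 - (φ p).re = (φ (1 - p)).re := by simp [hφ_one]
        _ ≤ ‖φ (1 - p)‖ := Complex.re_le_norm _
        _ ≤ ‖φ‖ * ‖1 - p‖ := φ.le_opNorm _
        _ ≤ 1 := by rwa [hφ, one_mul]
    linarith
  · obtain ⟨φ, hφ, hφ_one, hφp⟩ := exists_state_re_eq_logNorm (-p)
    have := h φ hφ hφ_one
    rw [← hφp, map_neg, Complex.neg_re]
    linarith

/-- Let `A` be a unital Banach algebra and `p ∈ A` an idempotent.  Then
`‖1 − p‖ ≤ 1` if and only if `p` is accretive (its numerical range lies in the closed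
right half plane). -/
theorem idempotent_norm_one_sub_le_one_iff_accretive
    {A : Type*} [NormedRing A] [NormedAlgebra ℂ A] [NormOneClass A] [CompleteSpace A]
    (p : A) (hp : p * p = p) :
    ‖1 - p‖ ≤ 1 ↔
      ∀ φ : StrongDual ℂ A, ‖φ‖ = 1 → φ 1 = 1 → 0 ≤ (φ p).re :=
  idempotent_norm_one_sub_le_one_iff_accretive_general p hp
end

section
/- For 0 < α < 1 there is a constant K such that for any unital Banach algebra A, commuting accretive elements a, b ∈ A, and c ∈ A with ‖c‖ ≤ 1, one has ‖(a^α − b^α)c‖ ≤ K ‖(a−b)c‖^α. -/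
/-!
Multiplied by `c`, the difference of the two Balakrishnan integrands at `t > 0` is
`t^(α-1) ((t+a)⁻¹a − (t+b)⁻¹b) c = t^α (t+a)⁻¹ (t+b)⁻¹ (a−b) c`, because `a` and `b` commute.
Accretivity gives `t‖x‖ ≤ ‖(t+a)x‖`, hence `t + a` is invertible with `‖(t+a)⁻¹‖ ≤ 1/t` and
`‖(t+a)⁻¹a‖ = ‖1 − t(t+a)⁻¹‖ ≤ 2`. So the integrand is bounded both by `4 t^(α-1)` and by
`δ t^(α-2)`, where `δ = ‖(a−b)c‖`; integrating the first bound over `(0, δ]` and the second over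
`(δ, ∞)` gives `‖(a^α − b^α)c‖ ≤ |sin(απ)/π| (4/α + 1/(1−α)) δ^α`.
-/

open MeasureTheory

/-- The fractional power of `x` given by the Balakrishnan representation
`x^α = (sin(απ)/π) ∫₀^∞ t^{α−1} (t+x)⁻¹ x dt`. -/
noncomputable def balPow {A : Type*} [NormedRing A] [NormedSpace ℝ A]
    (x : A) (α : ℝ) : A :=
  (Real.sin (α * Real.pi) / Real.pi) •
    ∫ t in Set.Ioi (0 : ℝ), t ^ (α - 1) • (Ring.inverse (t • (1 : A) + x) * x)

open Set

def Accretive {A : Type*} [NormedRing A] [NormedSpace ℂ A] (a : A) : Prop :=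
  ∀ φ : StrongDual ℂ A, ‖φ‖ = 1 → φ 1 = 1 → 0 ≤ (φ a).re

section Accretive

variable {A : Type*} [NormedRing A] [NormedAlgebra ℂ A] [NormOneClass A] {a : A}

theorem Accretive.re_apply_mul_nonneg (ha : Accretive a) {x : A} {g : StrongDual ℂ A}
    (hg : ‖g‖ ≤ 1) (hgx : g x = ‖x‖) : 0 ≤ (g (a * x)).re := by
  rcases eq_or_ne x 0 with rfl | hx
  · simp
  have hx : 0 < ‖x‖ := norm_pos_iff.mpr hx
  -- `z ↦ g (z * x) / ‖x‖` is a state, to which accretivity applies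
  set ψ : StrongDual ℂ A := ((‖x‖⁻¹ : ℝ) : ℂ) • g.comp ((ContinuousLinearMap.mul ℂ A).flip x)
  have hψ (z : A) : ψ z = ((‖x‖⁻¹ : ℝ) : ℂ) * g (z * x) := rfl
  have hψ1 : ψ 1 = 1 := by
    rw [hψ, one_mul, hgx, ← Complex.ofReal_mul, inv_mul_cancel₀ hx.ne', Complex.ofReal_one]
  have hψnorm : ‖ψ‖ = 1 := by
    refine le_antisymm (ContinuousLinearMap.opNorm_le_bound _ zero_le_one fun z => ?_) ?_
    · rw [hψ, norm_mul, Complex.norm_real, Real.norm_of_nonneg (inv_nonneg.mpr hx.le), one_mul,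
        inv_mul_le_iff₀ hx]
      calc ‖g (z * x)‖ ≤ 1 * ‖z * x‖ := g.le_of_opNorm_le hg _
        _ ≤ ‖x‖ * ‖z‖ := by rw [one_mul, mul_comm ‖x‖]; exact norm_mul_le z x
    · simpa [hψ1] using ψ.le_opNorm 1
  have hψa := ha ψ hψnorm hψ1
  rw [hψ, Complex.re_ofReal_mul] at hψa
  exact (mul_nonneg_iff_of_pos_left (inv_pos.mpr hx)).mp hψa

theorem Accretive.mul_norm_le_norm_smul_one_add_mul (ha : Accretive a) (t : ℝ) (x : A) :
    t * ‖x‖ ≤ ‖(t • 1 + a) * x‖ := by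
  obtain ⟨g, hg, hgx⟩ := exists_dual_vector'' ℂ x
  have hre := ha.re_apply_mul_nonneg hg hgx
  calc t * ‖x‖ ≤ (g ((t • 1 + a) * x)).re := by
        rw [add_mul, smul_mul_assoc, one_mul, map_add, g.map_smul_of_tower, hgx]
        simpa using hre
    _ ≤ ‖g ((t • 1 + a) * x)‖ := Complex.re_le_norm _
    _ ≤ ‖(t • 1 + a) * x‖ := (g.le_of_opNorm_le hg _).trans_eq (one_mul _)

theorem Accretive.norm_inverse_le_of_isUnit (ha : Accretive a) {t : ℝ} (ht : 0 < t)
    (hu : IsUnit (t • 1 + a)) : ‖Ring.inverse (t • 1 + a)‖ ≤ t⁻¹ := by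
  have h := ha.mul_norm_le_norm_smul_one_add_mul t (Ring.inverse (t • 1 + a))
  rw [Ring.mul_inverse_cancel _ hu, norm_one] at h
  rwa [← mul_one t⁻¹, le_inv_mul_iff₀ ht]

variable [CompleteSpace A]

theorem Accretive.isUnit_smul_one_add (ha : Accretive a) {t : ℝ} (ht : 0 < t) :
    IsUnit (t • 1 + a) := by
  have : Nontrivial A := NormOneClass.nontrivial
  set T := ‖a‖ + t
  have hT : 0 < T := by positivity
  obtain ⟨u, hu⟩ : IsUnit (T • (1 : A) + a) := by
    have h := spectrum.mem_resolventSet_of_norm_lt (𝕜 := ℂ) (a := a) (k := -(T : ℂ))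
      (by rw [norm_neg, Complex.norm_real, Real.norm_of_nonneg hT.le]; linarith)
    have e : algebraMap ℂ A (-(T : ℂ)) - a = -(T • 1 + a) := by
      rw [Algebra.algebraMap_eq_smul_one, neg_smul, Complex.coe_smul]; abel
    rw [spectrum.mem_resolventSet_iff, e] at h
    exact (IsUnit.neg_iff _).mp h
  have hinv : ‖(↑u⁻¹ : A)‖ ≤ T⁻¹ := by
    simpa [← hu] using ha.norm_inverse_le_of_isUnit hT (hu ▸ u.isUnit)
  -- `t • 1 + a` is at distance `T - t < T ≤ ‖(T • 1 + a)⁻¹‖⁻¹` from the unit `T • 1 + a`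
  have hnear : ‖(t • 1 + a) - u‖ < ‖(↑u⁻¹ : A)‖⁻¹ := by
    rw [hu, show t • (1 : A) + a - (T • 1 + a) = (t - T) • 1 by module, norm_smul, norm_one,
      mul_one, Real.norm_eq_abs, abs_of_nonpos (by simp [T])]
    calc -(t - T) < T := by simp [T, ht]
      _ ≤ ‖(↑u⁻¹ : A)‖⁻¹ := (le_inv_comm₀ hT (norm_pos_iff.mpr u⁻¹.ne_zero)).mpr hinv
  exact (Units.ofNearby u _ hnear).isUnit

theorem Accretive.norm_inverse_le (ha : Accretive a) {t : ℝ} (ht : 0 < t) :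
    ‖Ring.inverse (t • 1 + a)‖ ≤ t⁻¹ :=
  ha.norm_inverse_le_of_isUnit ht (ha.isUnit_smul_one_add ht)

end Accretive

section Kernel

variable {A : Type*} [Ring A] [Algebra ℝ A]

noncomputable def balKernel (x : A) (t : ℝ) : A :=
  Ring.inverse (t • 1 + x) * x

theorem balKernel_eq_one_sub {x : A} {t : ℝ} (hx : IsUnit (t • 1 + x)) :
    balKernel x t = 1 - t • Ring.inverse (t • 1 + x) := by
  have h := Ring.inverse_mul_cancel _ hx
  rw [mul_add, mul_smul_comm, mul_one] at h
  exact eq_sub_of_add_eq' h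

theorem balKernel_sub_balKernel {a b : A} (hab : Commute a b) {t : ℝ} (ha : IsUnit (t • 1 + a))
    (hb : IsUnit (t • 1 + b)) :
    balKernel a t - balKernel b t =
      t • (Ring.inverse (t • 1 + a) * Ring.inverse (t • 1 + b) * (a - b)) := by
  set Ra := Ring.inverse (t • (1 : A) + a)
  set Rb := Ring.inverse (t • (1 : A) + b)
  have hR : Commute Ra Rb := Commute.ringInverse_ringInverse <| by
    simp only [Commute, SemiconjBy, add_mul, mul_add, smul_mul_assoc, mul_smul_comm, one_mul,
      mul_one, smul_add, hab.eq]
    abel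
  calc balKernel a t - balKernel b t
      = Ra * Rb * ((t • 1 + b) * a) - Ra * Rb * ((t • 1 + a) * b) := by
        rw [balKernel, balKernel, mul_assoc Ra, ← mul_assoc Rb, Ring.inverse_mul_cancel _ hb,
          one_mul, hR.eq, mul_assoc Rb, ← mul_assoc Ra, Ring.inverse_mul_cancel _ ha, one_mul]
    _ = t • (Ra * Rb * (a - b)) := by
        rw [← mul_sub, ← mul_smul_comm]
        congr 1
        simp only [add_mul, smul_mul_assoc, one_mul, hab.eq, smul_sub]
        abel

end Kernel

section Integral

variable {E : Type*} [NormedAddCommGroup E] [NormedSpace ℝ E] {f : ℝ → E} {s C δ : ℝ}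

theorem norm_rpow_smul_le_of_norm_le {x : E} {t : ℝ} (ht : 0 < t) (h : ‖x‖ ≤ C) :
    ‖t ^ s • x‖ ≤ C * t ^ s := by
  rw [norm_smul, Real.norm_of_nonneg (Real.rpow_nonneg ht.le s), mul_comm]
  gcongr

theorem norm_rpow_smul_le_of_norm_le_inv_mul {x : E} {t : ℝ} (ht : 0 < t) (h : ‖x‖ ≤ t⁻¹ * C) :
    ‖t ^ s • x‖ ≤ C * t ^ (s - 1) := by
  rw [norm_smul, Real.norm_of_nonneg (Real.rpow_nonneg ht.le s), Real.rpow_sub_one ht.ne']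
  calc t ^ s * ‖x‖ ≤ t ^ s * (t⁻¹ * C) := by gcongr
    _ = C * (t ^ s / t) := by ring

theorem integrableOn_Ioc_and_norm_integral_le_of_le_rpow (hs : -1 < s) (hδ : 0 ≤ δ)
    (hf : AEStronglyMeasurable f (volume.restrict (Ioc 0 δ)))
    (hbound : ∀ t ∈ Ioc 0 δ, ‖f t‖ ≤ C * t ^ s) :
    IntegrableOn f (Ioc 0 δ) ∧ ‖∫ t in Ioc 0 δ, f t‖ ≤ C * (δ ^ (s + 1) / (s + 1)) := by
  have hint : IntegrableOn (fun t => C * t ^ s) (Ioc 0 δ) :=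
    ((intervalIntegrable_iff_integrableOn_Ioc_of_le hδ).mp
      (intervalIntegral.intervalIntegrable_rpow' hs)).const_mul C
  have hae : ∀ᵐ t ∂volume.restrict (Ioc 0 δ), ‖f t‖ ≤ C * t ^ s :=
    ae_restrict_of_forall_mem measurableSet_Ioc hbound
  refine ⟨hint.mono' hf hae, (norm_integral_le_of_norm_le hint hae).trans_eq ?_⟩
  rw [integral_const_mul, ← intervalIntegral.integral_of_le hδ, integral_rpow (Or.inl hs),
    Real.zero_rpow (by linarith), sub_zero]

theorem integrableOn_Ioi_and_norm_integral_le_of_le_rpow (hs : s < -1) (hδ : 0 < δ)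
    (hf : AEStronglyMeasurable f (volume.restrict (Ioi δ)))
    (hbound : ∀ t ∈ Ioi δ, ‖f t‖ ≤ C * t ^ s) :
    IntegrableOn f (Ioi δ) ∧ ‖∫ t in Ioi δ, f t‖ ≤ C * (-δ ^ (s + 1) / (s + 1)) := by
  have hint : IntegrableOn (fun t => C * t ^ s) (Ioi δ) :=
    (integrableOn_Ioi_rpow_of_lt hs hδ).const_mul C
  have hae : ∀ᵐ t ∂volume.restrict (Ioi δ), ‖f t‖ ≤ C * t ^ s :=
    ae_restrict_of_forall_mem measurableSet_Ioi hbound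
  refine ⟨hint.mono' hf hae, (norm_integral_le_of_norm_le hint hae).trans_eq ?_⟩
  rw [integral_const_mul, integral_Ioi_rpow_of_lt hs hδ]

theorem integrableOn_Ioi_and_norm_integral_le_of_rpow_bounds {α C₁ C₂ : ℝ}
    (hα : α ∈ Ioo 0 1) (hδ : 0 < δ) (hf : AEStronglyMeasurable f (volume.restrict (Ioi 0)))
    (h₁ : ∀ t ∈ Ioc 0 δ, ‖f t‖ ≤ C₁ * t ^ (α - 1)) (h₂ : ∀ t ∈ Ioi δ, ‖f t‖ ≤ C₂ * t ^ (α - 2)) :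
    IntegrableOn f (Ioi 0) ∧
      ‖∫ t in Ioi 0, f t‖ ≤ C₁ * (δ ^ α / α) + C₂ * (δ ^ (α - 1) / (1 - α)) := by
  obtain ⟨hα₀, hα₁⟩ := hα
  obtain ⟨hi₁, hn₁⟩ := integrableOn_Ioc_and_norm_integral_le_of_le_rpow (by linarith) hδ.le
    (hf.mono_measure (Measure.restrict_mono Ioc_subset_Ioi_self le_rfl)) h₁
  obtain ⟨hi₂, hn₂⟩ := integrableOn_Ioi_and_norm_integral_le_of_le_rpow (by linarith) hδ
    (hf.mono_measure (Measure.restrict_mono (Ioi_subset_Ioi hδ.le) le_rfl)) h₂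
  rw [← Ioc_union_Ioi_eq_Ioi hδ.le]
  refine ⟨hi₁.union hi₂, ?_⟩
  rw [setIntegral_union (Ioc_disjoint_Ioi le_rfl) measurableSet_Ioi hi₁ hi₂]
  refine (norm_add_le _ _).trans (add_le_add (hn₁.trans_eq ?_) (hn₂.trans_eq ?_))
  · rw [sub_add_cancel]
  · rw [show α - 2 + 1 = α - 1 by ring, neg_div, ← div_neg, neg_sub]

end Integral

theorem balPow_sub_balPow_mul {A : Type*} [NormedRing A] [NormedAlgebra ℝ A] {a b : A} {α : ℝ}
    (ha : IntegrableOn (fun t => t ^ (α - 1) • balKernel a t) (Ioi 0))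
    (hb : IntegrableOn (fun t => t ^ (α - 1) • balKernel b t) (Ioi 0)) (c : A) :
    (balPow a α - balPow b α) * c = (Real.sin (α * Real.pi) / Real.pi) •
      ∫ t in Ioi 0, t ^ (α - 1) • ((balKernel a t - balKernel b t) * c) := by
  have hK (x : A) : balPow x α = (Real.sin (α * Real.pi) / Real.pi) •
      ∫ t in Ioi 0, t ^ (α - 1) • balKernel x t := rfl
  rw [hK, hK, ← smul_sub, smul_mul_assoc, ← integral_sub ha hb,
    ← integral_mul_const_of_integrable (by exact ha.sub hb)]
  simp only [← smul_sub, smul_mul_assoc]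

section Estimate

variable {A : Type*} [NormedRing A] [NormedAlgebra ℂ A] [NormOneClass A] [CompleteSpace A]
  {a b : A} {t : ℝ}

theorem Accretive.norm_balKernel_le_two (ha : Accretive a) (ht : 0 < t) : ‖balKernel a t‖ ≤ 2 := by
  rw [balKernel_eq_one_sub (ha.isUnit_smul_one_add ht)]
  calc ‖1 - t • Ring.inverse (t • 1 + a)‖ ≤ ‖(1 : A)‖ + ‖t • Ring.inverse (t • 1 + a)‖ :=
        norm_sub_le _ _
    _ = 1 + t * ‖Ring.inverse (t • 1 + a)‖ := by
        rw [norm_one, norm_smul, Real.norm_of_nonneg ht.le]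
    _ ≤ 1 + t * t⁻¹ := by gcongr; exact ha.norm_inverse_le ht
    _ = 2 := by rw [mul_inv_cancel₀ ht.ne']; norm_num

theorem Accretive.norm_balKernel_le_inv_mul (ha : Accretive a) (ht : 0 < t) :
    ‖balKernel a t‖ ≤ t⁻¹ * ‖a‖ :=
  (norm_mul_le _ _).trans (by gcongr; exact ha.norm_inverse_le ht)

theorem Accretive.norm_balKernel_sub_balKernel_mul_le (ha : Accretive a) (hb : Accretive b)
    (hab : Commute a b) (ht : 0 < t) (c : A) :
    ‖(balKernel a t - balKernel b t) * c‖ ≤ t⁻¹ * ‖(a - b) * c‖ := by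
  rw [balKernel_sub_balKernel hab (ha.isUnit_smul_one_add ht) (hb.isUnit_smul_one_add ht),
    smul_mul_assoc, mul_assoc, norm_smul, Real.norm_of_nonneg ht.le]
  calc t * ‖Ring.inverse (t • 1 + a) * Ring.inverse (t • 1 + b) * ((a - b) * c)‖
      ≤ t * (t⁻¹ * t⁻¹ * ‖(a - b) * c‖) := by
        gcongr
        refine (norm_mul₃_le).trans ?_
        gcongr
        exacts [ha.norm_inverse_le ht, hb.norm_inverse_le ht]
    _ = t⁻¹ * ‖(a - b) * c‖ := by field_simp

theorem Accretive.continuousOn_balKernel (ha : Accretive a) :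
    ContinuousOn (balKernel a) (Ioi 0) := by
  intro t ht
  obtain ⟨u, hu⟩ := ha.isUnit_smul_one_add ht
  have hinv : ContinuousAt Ring.inverse (t • (1 : A) + a) := hu ▸ NormedRing.inverse_continuousAt u
  exact ((hinv.comp (f := fun t : ℝ => t • (1 : A) + a) (by fun_prop)).mul
    continuousAt_const).continuousWithinAt

theorem Accretive.integrableOn_rpow_smul_balKernel (ha : Accretive a) {α : ℝ} (hα : α ∈ Ioo 0 1) :
    IntegrableOn (fun t => t ^ (α - 1) • balKernel a t) (Ioi 0) := by
  refine (integrableOn_Ioi_and_norm_integral_le_of_rpow_bounds hα one_pos ?_ (C₁ := 2)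
    (C₂ := ‖a‖) (fun t ht => ?_) (fun t ht => ?_)).1
  · exact ((continuousOn_id.rpow_const fun t ht => Or.inl (ne_of_gt ht)).smul
      ha.continuousOn_balKernel).aestronglyMeasurable measurableSet_Ioi
  · exact norm_rpow_smul_le_of_norm_le ht.1 (ha.norm_balKernel_le_two ht.1)
  · have ht : 0 < t := one_pos.trans ht
    rw [show α - 2 = α - 1 - 1 by ring]
    exact norm_rpow_smul_le_of_norm_le_inv_mul ht (ha.norm_balKernel_le_inv_mul ht)

theorem Accretive.norm_balPow_sub_balPow_mul_le (ha : Accretive a) (hb : Accretive b)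
    (hab : Commute a b) {α : ℝ} (hα : α ∈ Ioo 0 1) {c : A} (hc : ‖c‖ ≤ 1) :
    ‖(balPow a α - balPow b α) * c‖ ≤
      |Real.sin (α * Real.pi) / Real.pi| * (4 / α + 1 / (1 - α)) * ‖(a - b) * c‖ ^ α := by
  set δ := ‖(a - b) * c‖
  set G : ℝ → A := fun t => t ^ (α - 1) • ((balKernel a t - balKernel b t) * c)
  have hG₁ (t : ℝ) (ht : 0 < t) : ‖G t‖ ≤ 4 * t ^ (α - 1) := by
    refine norm_rpow_smul_le_of_norm_le ht ((norm_mul_le _ _).trans ?_)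
    calc ‖balKernel a t - balKernel b t‖ * ‖c‖ ≤ (2 + 2) * 1 := by
          gcongr
          exact (norm_sub_le _ _).trans
            (add_le_add (ha.norm_balKernel_le_two ht) (hb.norm_balKernel_le_two ht))
      _ = 4 := by norm_num
  have hG₂ (t : ℝ) (ht : 0 < t) : ‖G t‖ ≤ δ * t ^ (α - 2) := by
    rw [show α - 2 = α - 1 - 1 by ring]
    exact norm_rpow_smul_le_of_norm_le_inv_mul ht
      (ha.norm_balKernel_sub_balKernel_mul_le hb hab ht c)
  have hδ : 0 ≤ δ := norm_nonneg _
  clear_value δ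
  rw [balPow_sub_balPow_mul (ha.integrableOn_rpow_smul_balKernel hα)
    (hb.integrableOn_rpow_smul_balKernel hα), norm_smul, Real.norm_eq_abs, mul_assoc]
  gcongr
  rcases hδ.eq_or_lt with rfl | hδ
  · have hG : ∫ t in Ioi 0, G t = 0 := setIntegral_eq_zero_of_forall_eq_zero fun t ht =>
      norm_le_zero_iff.mp (by simpa using hG₂ t ht)
    rw [hG, Real.zero_rpow hα.1.ne', norm_zero, mul_zero]
  · have hGmeas : AEStronglyMeasurable G (volume.restrict (Ioi 0)) :=
      ((continuousOn_id.rpow_const fun t ht => Or.inl (ne_of_gt ht)).smul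
        ((ha.continuousOn_balKernel.sub hb.continuousOn_balKernel).mul
          continuousOn_const)).aestronglyMeasurable measurableSet_Ioi
    obtain ⟨-, hGint⟩ := integrableOn_Ioi_and_norm_integral_le_of_rpow_bounds hα hδ hGmeas
      (fun t ht => hG₁ t ht.1) (fun t ht => hG₂ t (hδ.trans ht))
    refine hGint.trans_eq ?_
    have hα₁ : 1 - α ≠ 0 := by linarith [hα.2]
    rw [Real.rpow_sub_one hδ.ne']
    field_simp [hα.1.ne', hα₁]

end Estimate

/-- For `0 < α < 1` there is a constant `K` such that for any unital
Banach algebra `A`, commuting accretive elements `a, b ∈ A`, and `c ∈ A` with `‖c‖ ≤ 1`,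
one has `‖(a^α − b^α)c‖ ≤ K ‖(a−b)c‖^α`. -/
theorem exists_const_balPow_diff_le
    (α : ℝ) (hα : α ∈ Set.Ioo (0 : ℝ) 1) :
    ∃ K : ℝ, ∀ (A : Type) (_ : NormedRing A) (_ : NormedAlgebra ℂ A)
      (_ : NormOneClass A) (_ : CompleteSpace A) (a b c : A),
      (∀ φ : StrongDual ℂ A, ‖φ‖ = 1 → φ 1 = 1 → 0 ≤ (φ a).re) →
      (∀ φ : StrongDual ℂ A, ‖φ‖ = 1 → φ 1 = 1 → 0 ≤ (φ b).re) →
      a * b = b * a → ‖c‖ ≤ 1 →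
      ‖(balPow a α - balPow b α) * c‖ ≤ K * ‖(a - b) * c‖ ^ α :=
  ⟨_, fun _ _ _ _ _ _ _ _ ha hb hab hc => Accretive.norm_balPow_sub_balPow_mul_le ha hb hab hα hc⟩
end

section
/- Let A be a unital Banach algebra and J a closed right ideal of A possessing a left contractive approximate identity (e_t) with each ‖1 − e_t‖ ≤ 1. Then for every compact subset K of J there exists z ∈ J with ‖1 − z‖ ≤ 1 such that K ⊆ zJ ⊆ zA. Moreover z can be chosen so that each x ∈ K equals zw with ‖w − x‖ ≤ 2ε, for any prescribed ε > 0. -/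
/-!
Cohen's factorization argument. Put `u₀ = 1` and `u_{n+1} = u_n - 2^{-(n+1)} (1 - f_{n+1})` with
`f_k` taken from the approximate identity, so that `u_n = 2^{-n} + ∑_{k=1}^n 2^{-k} f_k` satisfies
`‖1 - u_n‖ ≤ 1 - 2^{-n}`; hence `u_n` is invertible with `‖u_n⁻¹‖ ≤ 2^n` and `u_n → z ∈ J`.
Since `u_n⁻¹ K` is a compact subset of `J`, `f_{n+1}` can be chosen with
`‖(1 - f_{n+1}) u_n⁻¹ x‖ ≤ ε 2^{-(n+1)}` uniformly on `K`. Then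
`u_{n+1}⁻¹ x - u_n⁻¹ x = u_{n+1}⁻¹ (u_n - u_{n+1}) u_n⁻¹ x` has norm at most `ε 2^{-(n+1)}`, so
`w = lim u_n⁻¹ x` exists, `‖w - x‖ ≤ ε` and `x = u_n (u_n⁻¹ x) → z w`.
-/

open Filter Topology Metric
open scoped Ring

lemma eventually_forall_norm_one_sub_mul_le {A : Type*} [NormedRing A] {ι : Type*}
    {l : Filter ι} {e : ι → A} {C : ℝ} (hC : ∀ t, ‖1 - e t‖ ≤ C) {S : Set A}
    (hS : IsCompact S) (hlim : ∀ y ∈ S, Tendsto (fun t => e t * y) l (𝓝 y))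
    {δ : ℝ} (hδ : 0 < δ) : ∀ᶠ t in l, ∀ y ∈ S, ‖(1 - e t) * y‖ ≤ δ := by
  obtain ⟨η, hη, hCη⟩ := exists_pos_mul_lt (half_pos hδ) C
  obtain ⟨F, hFS, hcover⟩ := hS.elim_nhds_subcover (fun y => ball y η)
    fun y _ => ball_mem_nhds y hη
  have hF : ∀ᶠ t in l, ∀ c ∈ F, ‖(1 - e t) * c‖ ≤ δ / 2 := by
    refine (eventually_all_finset F).2 fun c hc => ?_
    filter_upwards [(Metric.tendsto_nhds.1 (hlim c (hFS c hc))) _ (half_pos hδ)] with t ht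
    rw [sub_mul, one_mul, ← dist_eq_norm, dist_comm]
    exact ht.le
  filter_upwards [hF] with t ht y hy
  obtain ⟨c, hc, hyc⟩ := Set.mem_iUnion₂.1 (hcover hy)
  calc ‖(1 - e t) * y‖ = ‖(1 - e t) * (y - c) + (1 - e t) * c‖ := by
        rw [← mul_add, sub_add_cancel]
    _ ≤ C * η + δ / 2 :=
        norm_add_le_of_le (norm_mul_le_of_le (hC t) (mem_ball_iff_norm.1 hyc).le) (ht c hc)
    _ ≤ δ := by linarith

lemma Ring.inverse_mul_mem_of_sub_smul_one_mem {𝕜 A : Type*} [Field 𝕜] [Ring A] [Algebra 𝕜 A]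
    {J : Submodule 𝕜 A} (hJr : ∀ x ∈ J, ∀ a : A, x * a ∈ J) {v : A} (hv : IsUnit v) {c : 𝕜}
    (hc : c ≠ 0) (hvc : v - c • 1 ∈ J) {x : A} (hx : x ∈ J) : v⁻¹ʳ * x ∈ J := by
  have hvx : v * (v⁻¹ʳ * x) = x := by rw [← mul_assoc, Ring.mul_inverse_cancel v hv, one_mul]
  have key : v⁻¹ʳ * x = c⁻¹ • (x - (v - c • 1) * (v⁻¹ʳ * x)) := by
    rw [sub_mul, hvx, smul_mul_assoc, one_mul, sub_sub_cancel, inv_smul_smul₀ hc]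
  rw [key]
  exact J.smul_mem _ (J.sub_mem hx (hJr _ hvc _))

lemma norm_inverse_le_of_norm_one_sub_le {A : Type*} [NormedRing A] [NormOneClass A]
    [CompleteSpace A] {v : A} {r : ℝ} (hr : 0 < r) (hv : ‖1 - v‖ ≤ 1 - r) :
    ‖v⁻¹ʳ‖ ≤ r⁻¹ := by
  have hlt : ‖1 - v‖ < 1 := by linarith
  calc ‖v⁻¹ʳ‖ = ‖∑' n : ℕ, (1 - v) ^ n‖ := by rw [geom_series_eq_inverse _ hlt, sub_sub_cancel]
    _ ≤ ‖(1 : A)‖ - 1 + (1 - ‖1 - v‖)⁻¹ := tsum_geometric_le_of_norm_lt_one _ hlt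
    _ ≤ r⁻¹ := by rw [norm_one, sub_self, zero_add]; gcongr; linarith

section CohenSeq

variable {𝕜 A : Type*} [RCLike 𝕜] [NormedRing A] [NormedAlgebra 𝕜 A] {g : ℕ → A → A}

variable (𝕜) in
/-- With `f_k = g (k - 1) (u_{k-1})` this is the sequence `u_n = 2^{-n} + ∑_{k=1}^n 2^{-k} f_k`. -/
noncomputable def cohenSeq (g : ℕ → A → A) : ℕ → A
  | 0 => 1
  | n + 1 => cohenSeq g n - ((2 : 𝕜)⁻¹ ^ (n + 1)) • (1 - g n (cohenSeq g n))

lemma cohenSeq_sub_succ (n : ℕ) :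
    cohenSeq 𝕜 g n - cohenSeq 𝕜 g (n + 1) = ((2 : 𝕜)⁻¹ ^ (n + 1)) • (1 - g n (cohenSeq 𝕜 g n)) :=
  sub_sub_cancel _ _

lemma cohenSeq_sub_smul_one_mem {J : Submodule 𝕜 A} (hgJ : ∀ n v, g n v ∈ J) (n : ℕ) :
    cohenSeq 𝕜 g n - ((2 : 𝕜)⁻¹ ^ n) • 1 ∈ J := by
  induction n with
  | zero => simp [cohenSeq]
  | succ n ih =>
    have h : cohenSeq 𝕜 g (n + 1) - ((2 : 𝕜)⁻¹ ^ (n + 1)) • 1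
        = (cohenSeq 𝕜 g n - ((2 : 𝕜)⁻¹ ^ n) • 1)
          + ((2 : 𝕜)⁻¹ ^ (n + 1)) • g n (cohenSeq 𝕜 g n) := by
      simp only [cohenSeq]; module
    rw [h]
    exact J.add_mem ih (J.smul_mem _ (hgJ _ _))

variable (hg : ∀ n v, ‖1 - g n v‖ ≤ 1)
include hg

lemma norm_cohenSeq_sub_succ_le (n : ℕ) :
    ‖cohenSeq 𝕜 g n - cohenSeq 𝕜 g (n + 1)‖ ≤ 2⁻¹ ^ (n + 1) := by
  rw [cohenSeq_sub_succ, norm_smul, norm_pow, norm_inv, RCLike.norm_two]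
  exact mul_le_of_le_one_right (by positivity) (hg _ _)

lemma norm_one_sub_cohenSeq_le (n : ℕ) : ‖1 - cohenSeq 𝕜 g n‖ ≤ 1 - 2⁻¹ ^ n := by
  induction n with
  | zero => simp [cohenSeq]
  | succ n ih =>
    calc ‖1 - cohenSeq 𝕜 g (n + 1)‖
        = ‖(1 - cohenSeq 𝕜 g n) + (cohenSeq 𝕜 g n - cohenSeq 𝕜 g (n + 1))‖ := by
          rw [sub_add_sub_cancel]
      _ ≤ (1 - 2⁻¹ ^ n) + 2⁻¹ ^ (n + 1) :=
          norm_add_le_of_le ih (norm_cohenSeq_sub_succ_le (𝕜 := 𝕜) hg n)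
      _ = 1 - 2⁻¹ ^ (n + 1) := by ring

variable [CompleteSpace A]

lemma isUnit_cohenSeq (n : ℕ) : IsUnit (cohenSeq 𝕜 g n) := by
  have h : ‖1 - cohenSeq 𝕜 g n‖ < 1 := by
    linarith [norm_one_sub_cohenSeq_le (𝕜 := 𝕜) hg n, pow_pos (by norm_num : (0 : ℝ) < 2⁻¹) n]
  simpa using isUnit_one_sub_of_norm_lt_one h

lemma norm_inverse_cohenSeq_le [NormOneClass A] (n : ℕ) : ‖(cohenSeq 𝕜 g n)⁻¹ʳ‖ ≤ 2 ^ n := by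
  simpa using norm_inverse_le_of_norm_one_sub_le (by positivity) (norm_one_sub_cohenSeq_le hg n)

lemma inverse_cohenSeq_mul_mem {J : Submodule 𝕜 A} (hJr : ∀ x ∈ J, ∀ a : A, x * a ∈ J)
    (hgJ : ∀ n v, g n v ∈ J) (n : ℕ) {x : A} (hx : x ∈ J) : (cohenSeq 𝕜 g n)⁻¹ʳ * x ∈ J :=
  Ring.inverse_mul_mem_of_sub_smul_one_mem hJr (isUnit_cohenSeq hg n) (by simp)
    (cohenSeq_sub_smul_one_mem hgJ n) hx

lemma exists_tendsto_cohenSeq {J : Submodule 𝕜 A} (hJc : IsClosed (J : Set A))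
    (hgJ : ∀ n v, g n v ∈ J) :
    ∃ z ∈ J, ‖1 - z‖ ≤ 1 ∧ Tendsto (cohenSeq 𝕜 g) atTop (𝓝 z) := by
  have hdist (n : ℕ) : dist (cohenSeq 𝕜 g n) (cohenSeq 𝕜 g (n + 1)) ≤ 1 / 2 / 2 ^ n := by
    rw [dist_eq_norm]
    convert norm_cohenSeq_sub_succ_le (𝕜 := 𝕜) hg n using 1
    rw [pow_succ, inv_pow]
    ring
  obtain ⟨z, hz⟩ := cauchySeq_tendsto_of_complete (cauchySeq_of_le_geometric_two hdist)
  have hpow : Tendsto (fun n : ℕ => ((2 : 𝕜)⁻¹ ^ n) • (1 : A)) atTop (𝓝 0) := by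
    simpa using (tendsto_pow_atTop_nhds_zero_of_norm_lt_one
      (by norm_num : ‖(2 : 𝕜)⁻¹‖ < 1)).smul_const (1 : A)
  refine ⟨z, ?_, ?_, hz⟩
  · simpa using hJc.mem_of_tendsto (hz.sub hpow)
      (Eventually.of_forall (cohenSeq_sub_smul_one_mem hgJ))
  · refine le_of_tendsto (tendsto_const_nhds.sub hz).norm (Eventually.of_forall fun n => ?_)
    linarith [norm_one_sub_cohenSeq_le (𝕜 := 𝕜) hg n, pow_pos (by norm_num : (0 : ℝ) < 2⁻¹) n]

variable [NormOneClass A]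

lemma dist_inverse_cohenSeq_mul_succ_le {x : A} {δ : ℝ} (n : ℕ)
    (hgx : ‖(1 - g n (cohenSeq 𝕜 g n)) * ((cohenSeq 𝕜 g n)⁻¹ʳ * x)‖ ≤ δ * 2⁻¹ ^ (n + 1)) :
    dist ((cohenSeq 𝕜 g n)⁻¹ʳ * x) ((cohenSeq 𝕜 g (n + 1))⁻¹ʳ * x) ≤ δ / 2 / 2 ^ n := by
  have hid : (cohenSeq 𝕜 g (n + 1))⁻¹ʳ * x - (cohenSeq 𝕜 g n)⁻¹ʳ * x
      = (cohenSeq 𝕜 g (n + 1))⁻¹ʳ * (((2 : 𝕜)⁻¹ ^ (n + 1)) •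
          ((1 - g n (cohenSeq 𝕜 g n)) * ((cohenSeq 𝕜 g n)⁻¹ʳ * x))) := by
    rw [← sub_mul, Ring.inverse_sub_inverse (by simp [isUnit_cohenSeq hg]), cohenSeq_sub_succ]
    simp only [mul_assoc, smul_mul_assoc]
  rw [dist_eq_norm', hid]
  calc _ ≤ 2 ^ (n + 1) * (2⁻¹ ^ (n + 1) * (δ * 2⁻¹ ^ (n + 1))) := by
        refine norm_mul_le_of_le (norm_inverse_cohenSeq_le hg _) ?_
        rw [norm_smul, norm_pow, norm_inv, RCLike.norm_two]
        gcongr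
    _ = δ * 2⁻¹ ^ (n + 1) := by
        rw [← mul_assoc, ← mul_pow, mul_inv_cancel₀ two_ne_zero, one_pow, one_mul]
    _ = δ / 2 / 2 ^ n := by rw [pow_succ, inv_pow]; ring

lemma exists_eq_mul_of_tendsto_cohenSeq {J : Submodule 𝕜 A} (hJc : IsClosed (J : Set A))
    (hJr : ∀ x ∈ J, ∀ a : A, x * a ∈ J) (hgJ : ∀ n v, g n v ∈ J) {z x : A}
    (hz : Tendsto (cohenSeq 𝕜 g) atTop (𝓝 z)) (hx : x ∈ J) {δ : ℝ}
    (hgx : ∀ n, ‖(1 - g n (cohenSeq 𝕜 g n)) * ((cohenSeq 𝕜 g n)⁻¹ʳ * x)‖ ≤ δ * 2⁻¹ ^ (n + 1)) :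
    ∃ w ∈ J, x = z * w ∧ ‖w - x‖ ≤ δ := by
  have hdist (n : ℕ) := dist_inverse_cohenSeq_mul_succ_le hg n (hgx n)
  obtain ⟨w, hw⟩ := cauchySeq_tendsto_of_complete (cauchySeq_of_le_geometric_two hdist)
  have hfac (n : ℕ) : x = cohenSeq 𝕜 g n * ((cohenSeq 𝕜 g n)⁻¹ʳ * x) := by
    rw [← mul_assoc, Ring.mul_inverse_cancel _ (isUnit_cohenSeq hg n), one_mul]
  refine ⟨w, hJc.mem_of_tendsto hw (.of_forall fun n => inverse_cohenSeq_mul_mem hg hJr hgJ n hx),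
    tendsto_nhds_unique (tendsto_const_nhds.congr hfac) (hz.mul hw), ?_⟩
  simpa [cohenSeq, dist_eq_norm'] using dist_le_of_le_geometric_two_of_tendsto₀ hdist hw

end CohenSeq

theorem cohen_factorization_compact_subset_general
    {A : Type*} [NormedRing A] [NormedAlgebra ℂ A] [NormOneClass A] [CompleteSpace A]
    (J : Submodule ℂ A) (hJc : IsClosed (J : Set A))
    (hJr : ∀ x ∈ J, ∀ a : A, x * a ∈ J)
    {ι : Type*} [Nonempty ι] [SemilatticeSup ι]
    (e : ι → A) (heJ : ∀ t, e t ∈ J)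
    (heF : ∀ t, ‖1 - e t‖ ≤ 1)
    (hlcai : ∀ x ∈ J, Tendsto (fun t => e t * x) atTop (nhds x))
    (K : Set A) (hK : IsCompact K) (hKJ : K ⊆ J) (ε : ℝ) (hε : 0 < ε) :
    ∃ z ∈ J, ‖1 - z‖ ≤ 1 ∧
      ∀ x ∈ K, ∃ w ∈ J, x = z * w ∧ ‖w - x‖ ≤ 2 * ε := by
  -- At stage `n` we only need a good `t` when `v = u_n`, and then `v⁻¹ʳ K ⊆ J`.
  have hpick (n : ℕ) (v : A) : ∃ t, (∀ x ∈ K, v⁻¹ʳ * x ∈ J) →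
      ∀ x ∈ K, ‖(1 - e t) * (v⁻¹ʳ * x)‖ ≤ ε * 2⁻¹ ^ (n + 1) := by
    by_cases hv : ∀ x ∈ K, v⁻¹ʳ * x ∈ J
    · obtain ⟨t, ht⟩ := (eventually_forall_norm_one_sub_mul_le heF
        (hK.image (continuous_const_mul v⁻¹ʳ)) (by rintro _ ⟨x, hx, rfl⟩; exact hlcai _ (hv x hx))
        (by positivity : 0 < ε * 2⁻¹ ^ (n + 1))).exists
      exact ⟨t, fun _ x hx => ht _ ⟨x, hx, rfl⟩⟩
    · exact ⟨Classical.arbitrary ι, fun h => absurd h hv⟩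
  choose t ht using hpick
  have hgJ (n : ℕ) (v : A) : e (t n v) ∈ J := heJ _
  have hg (n : ℕ) (v : A) : ‖1 - e (t n v)‖ ≤ 1 := heF _
  obtain ⟨z, hzJ, hz1, hz⟩ := exists_tendsto_cohenSeq (𝕜 := ℂ) hg hJc hgJ
  refine ⟨z, hzJ, hz1, fun x hx => ?_⟩
  obtain ⟨w, hwJ, hxw, hwx⟩ := exists_eq_mul_of_tendsto_cohenSeq hg hJc hJr hgJ hz (hKJ hx)
    fun n => ht n _ (fun y hy => inverse_cohenSeq_mul_mem hg hJr hgJ n (hKJ hy)) x hx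
  exact ⟨w, hwJ, hxw, by linarith⟩

/-- Let `A` be a unital Banach algebra and `J` a closed right ideal of
`A` possessing a left contractive approximate identity `(e t)` with each `‖1 − e t‖ ≤ 1`.
Then for every compact subset `K` of `J` and every `ε > 0` there exists `z ∈ J` with
`‖1 − z‖ ≤ 1` such that every `x ∈ K` can be written `x = z w` with `w ∈ J` and
`‖w − x‖ ≤ 2ε`; in particular `K ⊆ zJ ⊆ zA`. -/
theorem cohen_factorization_compact_subset
    {A : Type*} [NormedRing A] [NormedAlgebra ℂ A] [NormOneClass A] [CompleteSpace A]
    (J : Submodule ℂ A) (hJc : IsClosed (J : Set A))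
    (hJr : ∀ x ∈ J, ∀ a : A, x * a ∈ J)
    {ι : Type*} [Nonempty ι] [SemilatticeSup ι]
    (e : ι → A) (heJ : ∀ t, e t ∈ J) (hec : ∀ t, ‖e t‖ ≤ 1)
    (heF : ∀ t, ‖1 - e t‖ ≤ 1)
    (hlcai : ∀ x ∈ J, Tendsto (fun t => e t * x) atTop (nhds x))
    (K : Set A) (hK : IsCompact K) (hKJ : K ⊆ J) (ε : ℝ) (hε : 0 < ε) :
    ∃ z ∈ J, ‖1 - z‖ ≤ 1 ∧
      ∀ x ∈ K, ∃ w ∈ J, x = z * w ∧ ‖w - x‖ ≤ 2 * ε :=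
  cohen_factorization_compact_subset_general J hJc hJr e heJ heF hlcai K hK hKJ ε hε
end
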